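/- arXiv:1910.08793 — 2 statements merged into one kernel-verified Lean document; each statement's English description precedes it below -/
import Mathlib

section
/- Let T be a normal Suslin tree with rational successors and let S be its lexicographical order. Then S has the countable chain condition; hence S is a Suslin line. -/
noncomputable section

def omega1 : Ordinal.{0} := (Cardinal.aleph 1).ord

/-- A tree presented by a partial order together with a height function `ht` into the
ordinals: heights are strictly monotone, the predecessors of any node form a chain, and
below any node there is a (necessarily unique) predecessor of each smaller height.
These axioms say exactly that the set of strict predecessors of `x` is well-ordered
with order type `ht x`. -/
structure TreeSystem (T : Type*) [PartialOrder T] where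
  ht : T → Ordinal.{0}
  ht_strictMono : ∀ {x y : T}, x < y → ht x < ht y
  pred_chain : ∀ x y z : T, y < x → z < x → y ≤ z ∨ z ≤ y
  pred_exists : ∀ x : T, ∀ o, o < ht x → ∃ z, z < x ∧ ht z = o

variable {T : Type*} [PartialOrder T]

/-- An antichain in the tree sense: pairwise incomparable. -/
def IsTreeAntichain (A : Set T) : Prop :=
  ∀ x ∈ A, ∀ y ∈ A, x ≠ y → ¬ x ≤ y ∧ ¬ y ≤ x

/-- An antichain of the forcing poset `P_T` (whose order is the reverse of the tree
order): pairwise incompatible, i.e. no two distinct members have a common upper bound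
in the tree order. -/
def IsForcingAntichain (A : Set T) : Prop :=
  ∀ p ∈ A, ∀ q ∈ A, p ≠ q → ¬ ∃ r : T, p ≤ r ∧ q ≤ r

def NoUncountableChain (T : Type*) [PartialOrder T] : Prop :=
  ¬ ∃ C : Set T, IsChain (· ≤ ·) C ∧ ¬ C.Countable

def NoUncountableAntichain (T : Type*) [PartialOrder T] : Prop :=
  ¬ ∃ A : Set T, IsTreeAntichain A ∧ ¬ A.Countable

/-- A tree is special if it carries a function to `ω` taking distinct values on
comparable pairs. -/
def SpecialTree (T : Type*) [PartialOrder T] : Prop :=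
  ∃ f : T → ℕ, ∀ x y : T, x < y → f x ≠ f y

namespace TreeSystem

/-- An ω₁-tree: all nodes have height `< ω₁`, all levels are countable, and
the height of the tree is ω₁ (all levels below ω₁ are nonempty). -/
def IsOmegaOneTree (S : TreeSystem T) : Prop :=
  (∀ x : T, S.ht x < omega1) ∧
  (∀ o : Ordinal, {x : T | S.ht x = o}.Countable) ∧
  (∀ o, o < omega1 → ∃ x : T, S.ht x = o)

/-- A Suslin tree: an ω₁-tree with no uncountable chain and no uncountable antichain. -/
def IsSuslin (S : TreeSystem T) : Prop :=
  S.IsOmegaOneTree ∧ NoUncountableChain T ∧ NoUncountableAntichain T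

/-- An Aronszajn tree: an ω₁-tree with no uncountable chain. -/
def IsAronszajn (S : TreeSystem T) : Prop :=
  S.IsOmegaOneTree ∧ NoUncountableChain T

/-- A special ω₁-tree. -/
def IsSpecial (S : TreeSystem T) : Prop :=
  S.IsOmegaOneTree ∧ SpecialTree T

/-- `Δ(x,y)`: the order type of the set `{z : z ≤ x and z ≤ y}` of common lower
bounds, computed as the supremum of `ht z + 1` over that (downward closed) chain. -/
def Delta (S : TreeSystem T) (x y : T) : Ordinal :=
  sSup ((fun z => S.ht z + 1) '' {z : T | z ≤ x ∧ z ≤ y})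

/-- The height of the tree: the least ordinal which is not the height of a node. -/
def height (S : TreeSystem T) : Ordinal :=
  sSup (Set.range fun x : T => S.ht x + 1)

/-- Normality for a tree of height ω₁ (so that every node has nodes of every
larger height `< ω₁` above it and splits): (a) every node has two incomparable nodes
above it; (b) every node has nodes above it at every height `< ω₁`; (c) two nodes of
the same non-successor (i.e. zero or limit) height with the same predecessors
are equal. -/
def IsNormal (S : TreeSystem T) : Prop :=
  (∀ x : T, ∃ y z : T, x < y ∧ x < z ∧ ¬ y ≤ z ∧ ¬ z ≤ y) ∧
  (∀ x : T, ∀ o, S.ht x ≤ o → o < omega1 → ∃ y, x ≤ y ∧ S.ht y = o) ∧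
  (∀ x y : T, S.ht x = S.ht y → (∀ p, S.ht x ≠ p + 1) →
    (∀ z : T, z < x ↔ z < y) → x = y)

/-- Normality for a tree of arbitrary height `S.height`. -/
def IsNormalGen (S : TreeSystem T) : Prop :=
  (∀ x : T, S.ht x + 1 < S.height → ∃ y z : T, x < y ∧ x < z ∧ ¬ y ≤ z ∧ ¬ z ≤ y) ∧
  (∀ x : T, ∀ o, S.ht x ≤ o → o < S.height → ∃ y, x ≤ y ∧ S.ht y = o) ∧
  (∀ x y : T, S.ht x = S.ht y → (∀ p, S.ht x ≠ p + 1) →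
    (∀ z : T, z < x ↔ z < y) → x = y)

/-- The set of immediate successors of `x`. -/
def ImmSucc (S : TreeSystem T) (x : T) : Set T :=
  {y : T | x < y ∧ S.ht y = S.ht x + 1}

/-- `T` has rational successors, as witnessed by the position function `q`: for each
node `x`, `q` is injective on the immediate successors of `x` and induces on them a
linear order isomorphic to the rationals. -/
def RationalSuccessors (S : TreeSystem T) (q : T → ℚ) : Prop :=
  ∀ x : T, Set.InjOn q (S.ImmSucc x) ∧ Nonempty ((q '' S.ImmSucc x) ≃o ℚ)

/-- The lexicographical order on the nodes of a tree with rational successors: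
`a <_S b` iff `a <_T b`, or `a, b` are incomparable and the immediate successor `y`
(of their maximal common predecessor `x`) below `a` precedes the one `z` below `b`
in the rational ordering of the successors of `x`. -/
def LexLt (S : TreeSystem T) (q : T → ℚ) (a b : T) : Prop :=
  a < b ∨ (¬ a ≤ b ∧ ¬ b ≤ a ∧ ∃ x y z : T,
    x < y ∧ x < z ∧ y ≤ a ∧ z ≤ b ∧
    S.ht y = S.ht x + 1 ∧ S.ht z = S.ht x + 1 ∧ q y < q z)

/-- Separability for the lexicographical order. -/
def LexSeparable (S : TreeSystem T) (q : T → ℚ) : Prop :=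
  ∃ D : Set T, D.Countable ∧ ∀ a b : T, S.LexLt q a b →
    (∃ c, S.LexLt q a c ∧ S.LexLt q c b) →
    ∃ d ∈ D, S.LexLt q a d ∧ S.LexLt q d b

/-- The countable chain condition for the lexicographical order: no uncountable family
of pairwise disjoint nonempty open intervals. -/
def LexCCC (S : TreeSystem T) (q : T → ℚ) : Prop :=
  ¬ ∃ I : Set (T × T), ¬ I.Countable ∧
    (∀ p ∈ I, ∃ c, S.LexLt q p.1 c ∧ S.LexLt q c p.2) ∧
    (∀ p ∈ I, ∀ r ∈ I, p ≠ r →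
      ¬ ∃ c, (S.LexLt q p.1 c ∧ S.LexLt q c p.2) ∧
             (S.LexLt q r.1 c ∧ S.LexLt q c r.2))

/-- The tree `T^n` of `n`-tuples of nodes of equal height, ordered coordinatewise
(as a subtype of the pointwise product order). -/
abbrev ProdTree (S : TreeSystem T) (n : ℕ) : Type _ :=
  {f : Fin n → T // ∀ i j : Fin n, S.ht (f i) = S.ht (f j)}

/-- `n`-entangledness of an ω₁-tree: every ω₁-sequence of pairwise disjoint injective
`n`-tuples with `{Δ(a_{ξ,i}, a_{ξ,j}) : i < j < n, ξ < ω₁}` bounded in ω₁ realizes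
every type `g : n → 2`, where `1` means `<_T` and `0` means `¬ <_T`. -/
def Entangled (S : TreeSystem T) (n : ℕ) : Prop :=
  ∀ a : Ordinal → ℕ → T,
    (∀ ξ, ξ < omega1 → ∀ i, i < n → ∀ j, j < n → i ≠ j → a ξ i ≠ a ξ j) →
    (∀ ξ, ξ < omega1 → ∀ δ, δ < omega1 → ξ ≠ δ →
      ∀ i, i < n → ∀ j, j < n → a ξ i ≠ a δ j) →
    (∃ β, β < omega1 ∧ ∀ ξ, ξ < omega1 → ∀ i j : ℕ, i < j → j < n →
      S.Delta (a ξ i) (a ξ j) ≤ β) →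
    ∀ g : ℕ → Bool, ∃ ξ β : Ordinal, ξ < β ∧ β < omega1 ∧
      ∀ i, i < n → (a ξ i < a β i ↔ g i = true)

end TreeSystem

end

/-!
If `a <_S c <_S b`, every node above `c` is `>_S a`, and above `c` there is a node all of
whose extensions are `<_S b`: below `b`, move to a sibling placed lower in the rational order.
So every nonempty interval contains a cone `{y | x ≤ y}`; disjoint intervals have incomparable
cone vertices, and an uncountable disjoint family of intervals would give an uncountable
antichain. Conversely, a countable set of nodes lies below some level `β < ω₁`; for `x` on that
level and an immediate successor `u` of `x`, the interval between `x` and `u` is nonempty but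
consists of nodes above `x`, so the set is not dense.
-/

namespace TreeSystem

variable {T : Type*} [PartialOrder T] (S : TreeSystem T) {q : T → ℚ}
  {a b c d u v w x y z : T}

theorem ht_mono : Monotone S.ht :=
  StrictMono.monotone fun _ _ => S.ht_strictMono

theorem le_total_of_le_of_le (S : TreeSystem T) (hx : x ≤ a) (hy : y ≤ a) :
    x ≤ y ∨ y ≤ x := by
  rcases hx.lt_or_eq with hx | rfl
  · rcases hy.lt_or_eq with hy | rfl
    exacts [S.pred_chain a x y hx hy, Or.inl hx.le]
  · exact Or.inr hy

theorem le_of_ht_le (h : x ≤ y ∨ y ≤ x) (hht : S.ht x ≤ S.ht y) : x ≤ y :=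
  h.elim id fun hyx => (eq_of_le_of_not_lt hyx fun hlt => (S.ht_strictMono hlt).not_ge hht).ge

theorem le_of_lt_of_mem_immSucc (hz : z < u) (hu : u ∈ S.ImmSucc w) : z ≤ w :=
  S.le_of_ht_le (S.pred_chain u z w hz hu.1) (Order.lt_add_one_iff.1 (hu.2 ▸ S.ht_strictMono hz))

theorem eq_of_le_of_mem_immSucc (hu : u ∈ S.ImmSucc w) (hv : v ∈ S.ImmSucc w) (h : u ≤ v) :
    u = v :=
  eq_of_le_of_not_lt h fun hlt => (S.ht_strictMono hlt).ne (hu.2.trans hv.2.symm)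

theorem eq_of_mem_immSucc_of_le_of_le (hu : u ∈ S.ImmSucc w) (hv : v ∈ S.ImmSucc w)
    (hua : u ≤ a) (hva : v ≤ a) : u = v :=
  (S.le_total_of_le_of_le hua hva).elim (S.eq_of_le_of_mem_immSucc hu hv)
    fun h => (S.eq_of_le_of_mem_immSucc hv hu h).symm

theorem le_or_le_of_mem_immSucc (hu : u ∈ S.ImmSucc w) (hua : u ≤ a) (hxa : x ≤ a) :
    u ≤ x ∨ x ≤ w := by
  rcases S.le_total_of_le_of_le hua hxa with h | h
  · exact Or.inl h
  rcases h.lt_or_eq with h | rfl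
  exacts [Or.inr (S.le_of_lt_of_mem_immSucc h hu), Or.inl le_rfl]

theorem le_of_le_of_le_of_mem_immSucc (hu : u ∈ S.ImmSucc w) (hv : v ∈ S.ImmSucc w)
    (hua : u ≤ a) (hvb : v ≤ b) (huv : u ≠ v) (hza : z ≤ a) (hzb : z ≤ b) : z ≤ w :=
  (S.le_or_le_of_mem_immSucc hu hua hza).resolve_left fun huz =>
    huv (S.eq_of_mem_immSucc_of_le_of_le hu hv (huz.trans hzb) hvb)

theorem exists_immSucc_le (h : a < b) : ∃ u ∈ S.ImmSucc a, u ≤ b := by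
  rcases (Order.add_one_le_of_lt (S.ht_strictMono h)).eq_or_lt with he | hlt
  · exact ⟨b, ⟨h, he.symm⟩, le_rfl⟩
  obtain ⟨u, hub, hu⟩ := S.pred_exists b _ hlt
  have hau : S.ht a < S.ht u := hu ▸ Order.lt_add_one_iff.2 le_rfl
  have hle : a ≤ u := S.le_of_ht_le (S.pred_chain b a u h hub) hau.le
  exact ⟨u, ⟨hle.lt_of_ne (ne_of_apply_ne S.ht hau.ne), hu⟩, hub.le⟩

theorem exists_lt_of_rationalSuccessors (hq : S.RationalSuccessors q) (hu : u ∈ S.ImmSucc w) :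
    ∃ m ∈ S.ImmSucc w, q m < q u := by
  obtain ⟨-, ⟨e⟩⟩ := hq w
  obtain ⟨r, hr⟩ := exists_lt (e ⟨q u, u, hu, rfl⟩)
  obtain ⟨m, hm, hqm⟩ := (e.symm r).2
  exact ⟨m, hm, hqm ▸ e.symm_apply_lt.2 hr⟩

def BranchLt (q : T → ℚ) (a b : T) : Prop :=
  ∃ w u v, u ∈ S.ImmSucc w ∧ v ∈ S.ImmSucc w ∧ u ≤ a ∧ v ≤ b ∧ q u < q v

variable {S}

theorem BranchLt.not_le (h : S.BranchLt q a b) : ¬ a ≤ b ∧ ¬ b ≤ a := by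
  obtain ⟨w, u, v, hu, hv, hua, hvb, huv⟩ := h
  have hne : u ≠ v := ne_of_apply_ne q huv.ne
  exact ⟨fun hab => hne (S.eq_of_mem_immSucc_of_le_of_le hu hv (hua.trans hab) hvb),
    fun hba => hne (S.eq_of_mem_immSucc_of_le_of_le hu hv hua (hvb.trans hba))⟩

theorem lexLt_iff : S.LexLt q a b ↔ a < b ∨ S.BranchLt q a b := by
  refine or_congr_right ⟨fun ⟨_, _, w, u, v, hwu, hwv, hua, hvb, htu, htv, huv⟩ =>
    ⟨w, u, v, ⟨hwu, htu⟩, ⟨hwv, htv⟩, hua, hvb, huv⟩,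
    fun h => ⟨h.not_le.1, h.not_le.2, ?_⟩⟩
  obtain ⟨w, u, v, hu, hv, hua, hvb, huv⟩ := h
  exact ⟨w, u, v, hu.1, hv.1, hua, hvb, hu.2, hv.2, huv⟩

theorem BranchLt.mono (h : S.BranchLt q a b) (ha : a ≤ c) (hb : b ≤ d) : S.BranchLt q c d :=
  let ⟨w, u, v, hu, hv, hua, hvb, huv⟩ := h
  ⟨w, u, v, hu, hv, hua.trans ha, hvb.trans hb, huv⟩

theorem BranchLt.of_le_right (h : S.BranchLt q a b) (hxb : x ≤ b) (hxa : ¬ x ≤ a) :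
    S.BranchLt q a x := by
  obtain ⟨w, u, v, hu, hv, hua, hvb, huv⟩ := h
  rcases S.le_or_le_of_mem_immSucc hv hvb hxb with hvx | hxw
  · exact ⟨w, u, v, hu, hv, hua, hvx, huv⟩
  · exact absurd (hxw.trans (hu.1.le.trans hua)) hxa

theorem BranchLt.asymm (h : S.BranchLt q a b) : ¬ S.BranchLt q b a := by
  rintro ⟨w', u', v', hu', hv', hub, hva, huv'⟩
  obtain ⟨w, u, v, hu, hv, hua, hvb, huv⟩ := h
  obtain rfl : w = w' := le_antisymm
    (S.le_of_le_of_le_of_mem_immSucc hu' hv' hub hva (ne_of_apply_ne q huv'.ne)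
      (hv.1.le.trans hvb) (hu.1.le.trans hua))
    (S.le_of_le_of_le_of_mem_immSucc hu hv hua hvb (ne_of_apply_ne q huv.ne)
      (hv'.1.le.trans hva) (hu'.1.le.trans hub))
  obtain rfl := S.eq_of_mem_immSucc_of_le_of_le hu hv' hua hva
  obtain rfl := S.eq_of_mem_immSucc_of_le_of_le hv hu' hvb hub
  exact lt_asymm huv huv'

theorem LexLt.trans_le (h : S.LexLt q a c) (hcy : c ≤ y) : S.LexLt q a y :=
  lexLt_iff.2 ((lexLt_iff.1 h).imp (·.trans_le hcy) (·.mono le_rfl hcy))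

theorem exists_forall_le_lexLt (hq : S.RationalSuccessors q) (h : S.LexLt q c b) :
    ∃ x, c ≤ x ∧ ∀ y, x ≤ y → S.LexLt q y b := by
  rcases lexLt_iff.1 h with hcb | hcb
  · obtain ⟨u, hu, hub⟩ := S.exists_immSucc_le hcb
    obtain ⟨m, hm, hmu⟩ := S.exists_lt_of_rationalSuccessors hq hu
    exact ⟨m, hm.1.le, fun y hy => lexLt_iff.2 (Or.inr ⟨c, m, u, hm, hu, hy, hub, hmu⟩)⟩
  · exact ⟨c, le_rfl, fun y hy => lexLt_iff.2 (Or.inr (hcb.mono hy le_rfl))⟩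

theorem exists_forall_le_lexLt_and_lexLt (hq : S.RationalSuccessors q) (hac : S.LexLt q a c)
    (hcb : S.LexLt q c b) : ∃ x, ∀ y, x ≤ y → S.LexLt q a y ∧ S.LexLt q y b := by
  obtain ⟨x, hcx, hx⟩ := exists_forall_le_lexLt hq hcb
  exact ⟨x, fun y hy => ⟨hac.trans_le (hcx.trans hy), hx y hy⟩⟩

theorem le_of_lexLt_of_lexLt (hxy : x < y) (hxd : S.LexLt q x d) (hdy : S.LexLt q d y) :
    x ≤ d := by
  by_contra hnle
  rcases lexLt_iff.1 hxd with hlt | hxd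
  · exact hnle hlt.le
  rcases lexLt_iff.1 hdy with hlt | hdy
  · exact hxd.not_le.2 ((S.le_total_of_le_of_le hlt.le hxy.le).resolve_right hnle)
  · exact hxd.asymm (hdy.of_le_right hxy.le hnle)

theorem lexCCC (hq : S.RationalSuccessors q) (hA : NoUncountableAntichain T) : S.LexCCC q := by
  rintro ⟨I, hI, hne, hdisj⟩
  have hcone (p : I) : ∃ x, ∀ y, x ≤ y → S.LexLt q p.1.1 y ∧ S.LexLt q y p.1.2 :=
    let ⟨_, hac, hcb⟩ := hne p p.2
    exists_forall_le_lexLt_and_lexLt hq hac hcb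
  choose f hf using hcone
  have hf_le : ∀ p r : I, f p ≤ f r → p = r := fun p r hle => by_contra fun hpr =>
    hdisj p p.2 r r.2 (Subtype.coe_injective.ne hpr) ⟨f r, hf p (f r) hle, hf r (f r) le_rfl⟩
  refine hA ⟨Set.range f, ?_, fun hc => hI ?_⟩
  · rintro _ ⟨p, rfl⟩ _ ⟨r, rfl⟩ hpr
    exact ⟨fun h => hpr (congrArg f (hf_le p r h)),
      fun h => hpr (congrArg f (hf_le r p h)).symm⟩
  · have := hc.to_subtype
    exact Set.countable_coe_iff.1
      (Set.rangeFactorization_injective.2 fun p r h => hf_le p r h.le).countable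

theorem exists_forall_mem_ht_lt (hht : ∀ x, S.ht x < omega1) {D : Set T} (hD : D.Countable) :
    ∃ β < omega1, ∀ d ∈ D, S.ht d < β := by
  have := hD.to_subtype
  rw [omega1, Cardinal.ord_aleph] at hht ⊢
  refine ⟨⨆ d : D, Order.succ (S.ht d),
    Ordinal.iSup_lt_omega_one fun d => (Cardinal.isSuccLimit_omega 1).succ_lt (hht d),
    fun d hd => (Order.lt_succ _).trans_le ?_⟩
  exact le_ciSup (f := fun d : D => Order.succ (S.ht d)) Ordinal.bddAbove_of_small ⟨d, hd⟩

theorem not_lexSeparable [NoMaxOrder T] (hq : S.RationalSuccessors q)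
    (hω : S.IsOmegaOneTree) : ¬ S.LexSeparable q := by
  rintro ⟨D, hD, hdense⟩
  obtain ⟨β, hβ, hDβ⟩ := exists_forall_mem_ht_lt hω.1 hD
  obtain ⟨x, rfl⟩ := hω.2.2 β hβ
  obtain ⟨y, hxy⟩ := exists_gt x
  obtain ⟨u, hu, -⟩ := S.exists_immSucc_le hxy
  obtain ⟨m, hm, hmu⟩ := S.exists_lt_of_rationalSuccessors hq hu
  obtain ⟨d, hdD, hxd, hdu⟩ := hdense x u (Or.inl hu.1)
    ⟨m, Or.inl hm.1, lexLt_iff.2 (Or.inr ⟨x, m, u, hm, hu, le_rfl, le_rfl, hmu⟩)⟩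
  exact (hDβ d hdD).not_ge (S.ht_mono (le_of_lexLt_of_lexLt hu.1 hxd hdu))

end TreeSystem

/-- the lexicographical order of a normal Suslin tree with rational
successors has the countable chain condition; hence it is a Suslin line (c.c.c. and
not separable). -/
theorem stmt13 {T : Type*} [PartialOrder T] (S : TreeSystem T)
    (hnorm : S.IsNormal) (hsus : S.IsSuslin) (q : T → ℚ)
    (hq : S.RationalSuccessors q) :
    S.LexCCC q ∧ ¬ S.LexSeparable q := by
  have : NoMaxOrder T := ⟨fun x => let ⟨y, _, hxy, _⟩ := hnorm.1 x; ⟨y, hxy⟩⟩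
  exact ⟨S.lexCCC hq hsus.2.2, S.not_lexSeparable hq hsus.1⟩
end

section
/- In any Suslin tree T there is a sequence of triples ⟨(x_i, y_i, z_i) : i < ω₁⟩ with x_i <_T y_i, x_i <_T z_i, y_i and z_i incomparable, and ht(y_i), ht(z_i) < ht(x_j) for i < j; and for any such sequence, the sequence of pairs ⟨(y_ξ, z_ξ) : ξ < ω₁⟩ does not realize the type (1,1), i.e., there do not exist ξ < β with y_ξ <_T y_β and z_ξ <_T z_β. -/
/-!
Every node of height `≥ α` lies above a node of height exactly `α`, and the nodes above a
non-splitting node form a chain. So if no node of height `≥ α` split, the uncountable part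
of the tree above level `α` would be a countable union of chains, one of which would be
uncountable. Hence in an Aronszajn (in particular a Suslin) tree splitting nodes occur at
cofinally many heights, and since `ω₁` is regular they can be picked by transfinite
recursion so that each splitting lies above all earlier ones.

On the other hand, if `y_ξ < y_β` and `z_ξ < z_β` with `ξ < β`, then `y_ξ` and `z_ξ` both lie in
the chain of predecessors of `x_β`, because they are below its successors `y_β`, `z_β` and
lower than it; so they would be comparable.
-/

open Ordinal Cardinal Set

theorem Ordinal.countable_Iio_iff_lt_omega_one {o : Ordinal.{u}} :
    (Iio o).Countable ↔ o < ω₁ := by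
  rw [← le_aleph0_iff_set_countable, Cardinal.mk_Iio_ordinal, lift_le_aleph0,
    ← lt_aleph_one_iff, lt_omega_iff_card_lt]

theorem Ordinal.exists_seq_hi_lt_lo {X : Type*} {P : X → Prop} (lo hi : X → Ordinal.{u})
    (hhi : ∀ t, hi t < ω₁) (hlo : ∀ α < ω₁, ∃ t, P t ∧ α ≤ lo t) :
    ∃ f : Ordinal.{u} → X, (∀ i, P (f i)) ∧
      ∀ i j, i < j → j < ω₁ → hi (f i) < lo (f j) := by
  have hpick : ∀ α : Ordinal.{u}, ∃ t, P t ∧ (α < ω₁ → α ≤ lo t) := by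
    intro α
    by_cases hα : α < ω₁
    · obtain ⟨t, hPt, hle⟩ := hlo α hα
      exact ⟨t, hPt, fun _ => hle⟩
    · obtain ⟨t, hPt, -⟩ := hlo 0 (omega_pos 1)
      exact ⟨t, hPt, fun h => absurd h hα⟩
  choose pick hpickP hpick_le using hpick
  let f : Ordinal.{u} → X :=
    wellFounded_lt.fix fun j rec => pick (⨆ i : Iio j, hi (rec i i.2) + 1)
  have hf : ∀ j, f j = pick (⨆ i : Iio j, hi (f i) + 1) := wellFounded_lt.fix_eq _
  refine ⟨f, fun i => hf i ▸ hpickP _, fun i j hij hj => ?_⟩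
  have : Countable (Iio j) := (countable_Iio_iff_lt_omega_one.2 hj).to_subtype
  have hbound : ⨆ k : Iio j, hi (f k) + 1 < ω₁ :=
    iSup_lt_omega_one fun k => (isSuccLimit_omega 1).add_one_lt (hhi _)
  calc hi (f i) < ⨆ k : Iio j, hi (f k) + 1 :=
        lt_iSup_add_one (fun k : Iio j => hi (f k)) ⟨i, hij⟩
    _ ≤ lo (f j) := hf j ▸ hpick_le _ hbound

theorem omega1_eq_omega_one : omega1 = ω₁ :=
  Cardinal.ord_aleph 1

theorem isChain_Ici_of_forall_le_or_le {α : Type*} [PartialOrder α] {p : α}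
    (h : ∀ y z, p < y → p < z → y ≤ z ∨ z ≤ y) : IsChain (· ≤ ·) (Ici p) := by
  intro y (hy : p ≤ y) z (hz : p ≤ z) _
  rcases hy.eq_or_lt with rfl | hy
  · exact Or.inl hz
  rcases hz.eq_or_lt with rfl | hz
  · exact Or.inr hy.le
  exact h y z hy hz

namespace TreeSystem

variable {T : Type*} [PartialOrder T] (S : TreeSystem T)

theorem ht_mono_s17 {x y : T} (h : x ≤ y) : S.ht x ≤ S.ht y := by
  rcases h.eq_or_lt with rfl | h
  exacts [le_rfl, (S.ht_strictMono h).le]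

theorem exists_le_ht_eq {w : T} {o : Ordinal} (h : o ≤ S.ht w) : ∃ p ≤ w, S.ht p = o := by
  rcases h.eq_or_lt with rfl | h
  · exact ⟨w, le_rfl, rfl⟩
  · obtain ⟨p, hp, rfl⟩ := S.pred_exists w o h
    exact ⟨p, hp.le, rfl⟩

theorem lt_of_lt_of_lt_of_ht_lt {a b c : T} (hac : a < c) (hbc : b < c)
    (h : S.ht a < S.ht b) : a < b := by
  rcases S.pred_chain c a b hac hbc with hab | hba
  · exact hab.lt_of_ne (by rintro rfl; exact h.false)
  · exact absurd (S.ht_mono_s17 hba) h.not_ge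

variable {S}

theorem IsOmegaOneTree.not_countable_setOf_le_ht (hS : S.IsOmegaOneTree) {α : Ordinal}
    (hα : α < omega1) : ¬ {w | α ≤ S.ht w}.Countable := by
  intro hcount
  have hcover : Iio omega1 ⊆ Iio α ∪ S.ht '' {w | α ≤ S.ht w} := by
    intro o (ho : o < omega1)
    rcases lt_or_ge o α with hoα | hαo
    · exact Or.inl hoα
    · obtain ⟨w, rfl⟩ := hS.2.2 o ho
      exact Or.inr ⟨w, hαo, rfl⟩
  have hαc : (Iio α).Countable := countable_Iio_iff_lt_omega_one.2 (omega1_eq_omega_one ▸ hα)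
  have hω₁c : (Iio omega1).Countable := (hαc.union (hcount.image _)).mono hcover
  rw [countable_Iio_iff_lt_omega_one, omega1_eq_omega_one] at hω₁c
  exact lt_irrefl _ hω₁c

theorem IsSuslin.isAronszajn (hS : S.IsSuslin) : S.IsAronszajn :=
  ⟨hS.1, hS.2.1⟩

theorem IsAronszajn.exists_split (hS : S.IsAronszajn) {α : Ordinal} (hα : α < omega1) :
    ∃ x y z : T, α ≤ S.ht x ∧ x < y ∧ x < z ∧ ¬ y ≤ z ∧ ¬ z ≤ y := by
  obtain ⟨hω, hchain⟩ := hS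
  by_contra! hsplit
  have hcover : {w | α ≤ S.ht w} ⊆ ⋃ p ∈ {p | S.ht p = α}, Ici p := by
    intro w (hw : α ≤ S.ht w)
    obtain ⟨p, hpw, hp⟩ := S.exists_le_ht_eq hw
    exact mem_biUnion hp hpw
  obtain ⟨p, hp : S.ht p = α, hunc⟩ : ∃ p ∈ {p | S.ht p = α}, ¬ (Ici p).Countable := by
    by_contra! hall
    exact hω.not_countable_setOf_le_ht hα (((hω.2.1 α).biUnion hall).mono hcover)
  refine hchain ⟨Ici p, isChain_Ici_of_forall_le_or_le fun y z hy hz => ?_, hunc⟩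
  by_cases hyz : y ≤ z
  exacts [Or.inl hyz, Or.inr (hsplit p y z hp.ge hy hz hyz)]

end TreeSystem

/-- in any Suslin tree there is an ω₁-sequence of triples
`(x_i, y_i, z_i)` with `x_i < y_i`, `x_i < z_i`, `y_i` and `z_i` incomparable, and
`ht y_i, ht z_i < ht x_j` for `i < j`; and for any such sequence, the sequence of
pairs `(y_ξ, z_ξ)` does not realize the type `(1,1)`. -/
theorem stmt17 {T : Type*} [PartialOrder T] (S : TreeSystem T) (h : S.IsSuslin) :
    (∃ x y z : Ordinal → T,
      (∀ i, i < omega1 → x i < y i ∧ x i < z i ∧ ¬ y i ≤ z i ∧ ¬ z i ≤ y i) ∧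
      (∀ i j : Ordinal, i < j → j < omega1 →
        S.ht (y i) < S.ht (x j) ∧ S.ht (z i) < S.ht (x j))) ∧
    (∀ x y z : Ordinal → T,
      (∀ i, i < omega1 → x i < y i ∧ x i < z i ∧ ¬ y i ≤ z i ∧ ¬ z i ≤ y i) →
      (∀ i j : Ordinal, i < j → j < omega1 →
        S.ht (y i) < S.ht (x j) ∧ S.ht (z i) < S.ht (x j)) →
      ¬ ∃ ξ β : Ordinal, ξ < β ∧ β < omega1 ∧ y ξ < y β ∧ z ξ < z β) := by
  have hω : ∀ w, S.ht w < ω₁ := omega1_eq_omega_one ▸ h.1.1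
  constructor
  · obtain ⟨f, hsplit, hlt⟩ := exists_seq_hi_lt_lo
      (P := fun t : T × T × T => t.1 < t.2.1 ∧ t.1 < t.2.2 ∧ ¬ t.2.1 ≤ t.2.2 ∧ ¬ t.2.2 ≤ t.2.1)
      (fun t => S.ht t.1) (fun t => S.ht t.2.1 ⊔ S.ht t.2.2)
      (fun t => max_lt (hω _) (hω _)) fun α hα => by
        obtain ⟨x, y, z, hαx, hsplit⟩ := h.isAronszajn.exists_split (omega1_eq_omega_one ▸ hα)
        exact ⟨(x, y, z), hsplit, hαx⟩
    exact ⟨fun i => (f i).1, fun i => (f i).2.1, fun i => (f i).2.2, fun i _ => hsplit i,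
      fun i j hij hj => max_lt_iff.1 (hlt i j hij (omega1_eq_omega_one ▸ hj))⟩
  · rintro x y z hsplit hht ⟨ξ, β, hξβ, hβ, hy, hz⟩
    obtain ⟨hxy, hxz, -, -⟩ := hsplit β hβ
    obtain ⟨-, -, hyz, hzy⟩ := hsplit ξ (hξβ.trans hβ)
    obtain ⟨hyx, hzx⟩ := hht ξ β hξβ hβ
    rcases S.pred_chain (x β) (y ξ) (z ξ) (S.lt_of_lt_of_lt_of_ht_lt hy hxy hyx)
      (S.lt_of_lt_of_lt_of_ht_lt hz hxz hzx) with hle | hle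
    exacts [hyz hle, hzy hle]
end
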